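/- The min-max weighted latency walk problem restricted to metric graphs with all vertex weights equal to 1 is equivalent to the metric TSP: the optimal cost OPT_G equals the minimum TSP tour length; consequently the min-max latency walk problem is APX-hard. -/

import Mathlib

open scoped ENNReal BigOperators

/-- Total edge length of the segment of the infinite walk `W` from index `a` to `b`. -/
noncomputable def walkLen {V : Type*} (l : V → V → ℝ≥0∞) (W : ℕ → V) (a b : ℕ) : ℝ≥0∞ :=
  ∑ i ∈ Finset.Ico a b, l (W i) (W (i + 1))

/-- The walk visits every vertex infinitely often. -/
def VisitsInfOften {V : Type*} (W : ℕ → V) : Prop :=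
  ∀ v : V, ∀ N : ℕ, ∃ a : ℕ, N ≤ a ∧ W a = v

/-- Latency of vertex `v` on infinite walk `W`: the supremum, over visits to `v`,
of the length of the sub-walk until the next visit to `v`. -/
noncomputable def latency {V : Type*} (l : V → V → ℝ≥0∞) (W : ℕ → V) (v : V) : ℝ≥0∞ :=
  ⨆ (a : ℕ) (_ : W a = v), ⨅ (b : ℕ) (_ : a < b ∧ W b = v), walkLen l W a b

/-- Cost of an infinite walk: the maximum weighted latency over all vertices. -/
noncomputable def walkCost {V : Type*} (l : V → V → ℝ≥0∞) (φ : V → ℝ≥0∞) (W : ℕ → V) : ℝ≥0∞ :=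
  ⨆ v : V, φ v * latency l W v

/-- Optimal cost over all infinite walks (complete graph) visiting all vertices
infinitely often. -/
noncomputable def OPT {V : Type*} (l : V → V → ℝ≥0∞) (φ : V → ℝ≥0∞) : ℝ≥0∞ :=
  ⨅ (W : ℕ → V) (_ : VisitsInfOften W), walkCost l φ W


/-!
Traversing a tour periodically gives every vertex latency equal to the tour length, so `OPT` is
at most the shortest tour. Conversely, in any walk visiting every vertex infinitely often some
vertex `u` has two consecutive visits between which every vertex is seen; shortcutting this
closed subwalk to first visits gives a tour no longer than it, and its length is at most the
latency of `u`.
-/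

open Finset Fin.NatCast

section

variable {V : Type*}

noncomputable def tourLength {n : ℕ} (l : V → V → ℝ≥0∞) (c : Fin n → V) : ℝ≥0∞ :=
  ∑ i, l (c i) (c (finRotate n i))

def cyclicWalk {n : ℕ} [NeZero n] (c : Fin n → V) (k : ℕ) : V :=
  c k

lemma walkCost_one (l : V → V → ℝ≥0∞) (W : ℕ → V) :
    walkCost l (fun _ => 1) W = ⨆ v, latency l W v := by
  simp only [walkCost, one_mul]

lemma walkLen_add (l : V → V → ℝ≥0∞) (W : ℕ → V) {a b c : ℕ} (hab : a ≤ b) (hbc : b ≤ c) :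
    walkLen l W a c = walkLen l W a b + walkLen l W b c :=
  (sum_Ico_consecutive _ hab hbc).symm

lemma walkLen_mono_right (l : V → V → ℝ≥0∞) (W : ℕ → V) {a b c : ℕ} (hbc : b ≤ c) :
    walkLen l W a b ≤ walkLen l W a c :=
  sum_le_sum_of_subset (Ico_subset_Ico_right hbc)

lemma walkLen_le_latency (l : V → V → ℝ≥0∞) {W : ℕ → V} {v : V} {s t : ℕ} (hs : W s = v)
    (hgap : ∀ k, s < k → k < t → W k ≠ v) :
    walkLen l W s t ≤ latency l W v :=
  le_iSup₂_of_le s hs <| le_iInf₂ fun _ ⟨hsk, hk⟩ =>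
    walkLen_mono_right l W (not_lt.mp fun hkt => hgap _ hsk hkt hk)

lemma tourLength_eq_sum_castSucc (l : V → V → ℝ≥0∞) {m : ℕ} (c : Fin (m + 1) → V) :
    tourLength l c = ∑ i : Fin m, l (c i.castSucc) (c i.succ) + l (c (Fin.last m)) (c 0) := by
  simp [tourLength, Fin.sum_univ_castSucc, Fin.coeSucc_eq_succ]

section cyclic

variable {n : ℕ} [NeZero n] (c : Fin n → V)

lemma cyclicWalk_add_period (k : ℕ) : cyclicWalk c (k + n) = cyclicWalk c k := by
  simp [cyclicWalk]

lemma visitsInfOften_cyclicWalk (hc : Function.Surjective c) : VisitsInfOften (cyclicWalk c) := by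
  intro v N
  obtain ⟨i, rfl⟩ := hc v
  refine ⟨N * n + i, le_add_right (Nat.le_mul_of_pos_right N (NeZero.pos n)), congrArg c ?_⟩
  simp

lemma walkLen_cyclicWalk (l : V → V → ℝ≥0∞) (a : ℕ) :
    walkLen l (cyclicWalk c) a (a + n) = tourLength l c := by
  calc walkLen l (cyclicWalk c) a (a + n)
      = ∑ i : Fin n, l (c ((a : Fin n) + i)) (c ((a : Fin n) + i + 1)) := by
        simp only [walkLen, cyclicWalk, sum_Ico_eq_sum_range, Nat.add_sub_cancel_left,
          ← Fin.sum_univ_eq_sum_range, Nat.cast_add, Nat.cast_one, Fin.cast_val_eq_self]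
    _ = ∑ i : Fin n, l (c i) (c (i + 1)) :=
        Equiv.sum_comp (Equiv.addLeft (a : Fin n)) fun i => l (c i) (c (i + 1))
    _ = tourLength l c := by simp [tourLength]

lemma latency_cyclicWalk_le (l : V → V → ℝ≥0∞) (v : V) :
    latency l (cyclicWalk c) v ≤ tourLength l c :=
  iSup₂_le fun a ha => iInf₂_le_of_le (a + n)
    ⟨lt_add_of_pos_right a (NeZero.pos n), (cyclicWalk_add_period c a).trans ha⟩
    (walkLen_cyclicWalk c l a).le

end cyclic

section shortcut

variable [PseudoEMetricSpace V] (W : ℕ → V)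

lemma edist_le_walkLen {a b : ℕ} (hab : a ≤ b) :
    edist (W a) (W b) ≤ walkLen edist W a b := by
  induction b, hab using Nat.le_induction with
  | base => simp
  | succ b hab ih =>
    calc edist (W a) (W (b + 1)) ≤ edist (W a) (W b) + edist (W b) (W (b + 1)) :=
          edist_triangle _ _ _
      _ ≤ walkLen edist W a b + edist (W b) (W (b + 1)) := add_le_add_left ih _
      _ = walkLen edist W a (b + 1) := (sum_Ico_succ_top hab _).symm

lemma sum_edist_le_walkLen {g : ℕ → ℕ} (hg : Monotone g) (m : ℕ) :
    ∑ i ∈ range m, edist (W (g i)) (W (g (i + 1))) ≤ walkLen edist W (g 0) (g m) := by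
  induction m with
  | zero => simp [walkLen]
  | succ m ih =>
    rw [sum_range_succ, walkLen_add _ _ (hg (Nat.zero_le m)) (hg m.le_succ)]
    exact add_le_add ih (edist_le_walkLen W (hg m.le_succ))

lemma tourLength_comp_le_walkLen {m : ℕ} {g : Fin (m + 1) → ℕ} (hg : Monotone g) {t : ℕ}
    (hgt : g (Fin.last m) ≤ t) (hWt : W t = W (g 0)) :
    tourLength edist (W ∘ g) ≤ walkLen edist W (g 0) t := by
  let h : ℕ → ℕ := fun k => g ⟨min k m, by omega⟩
  have hh : Monotone h := fun i j hij => hg (Fin.mk_le_mk.mpr (min_le_min_right m hij))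
  have hpath : ∑ i : Fin m, edist (W (g i.castSucc)) (W (g i.succ))
      ≤ walkLen edist W (g 0) (g (Fin.last m)) := by
    convert sum_edist_le_walkLen W hh m using 1
    · rw [← Fin.sum_univ_eq_sum_range (fun i => edist (W (h i)) (W (h (i + 1))))]
      refine sum_congr rfl fun i _ => ?_
      simp [h, Fin.castSucc, Fin.succ, Fin.castAdd, Fin.castLE]
    · simp [h, Fin.last]
  rw [tourLength_eq_sum_castSucc, walkLen_add _ _ (hg (Fin.zero_le _)) hgt, Function.comp_apply,
    Function.comp_apply, ← hWt]
  exact add_le_add hpath (edist_le_walkLen W hgt)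

-- The tour lists the vertices in the order of their first visits in `[s, t]`.
lemma exists_tour_le_walkLen [Fintype V] {s t : ℕ}
    (hWt : W t = W s) (hcover : ∀ v, ∃ k, s ≤ k ∧ k ≤ t ∧ W k = v) :
    ∃ e : Fin (Fintype.card V) ≃ V, tourLength edist e ≤ walkLen edist W s t := by
  classical
  let first : V → ℕ := fun v => Nat.find (hcover v)
  have hW_first (v : V) : W (first v) = v := (Nat.find_spec (hcover v)).2.2
  let S := univ.image first
  have hS (x : ℕ) (hx : x ∈ S) : s ≤ x ∧ x ≤ t ∧ first (W x) = x := by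
    obtain ⟨v, -, rfl⟩ := mem_image.mp hx
    obtain ⟨hsv, hvt, -⟩ := Nat.find_spec (hcover v)
    exact ⟨hsv, hvt, congrArg first (hW_first v)⟩
  have hst : s ≤ t := by
    obtain ⟨k, hsk, hkt, -⟩ := hcover (W s)
    exact hsk.trans hkt
  have hsS : s ∈ S := mem_image.mpr ⟨W s, mem_univ _,
    le_antisymm (Nat.find_le ⟨le_rfl, hst, rfl⟩) (Nat.find_spec (hcover (W s))).1⟩
  have hcard : S.card = Fintype.card V :=
    card_image_of_injective _ (Function.LeftInverse.injective hW_first)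
  have : Nonempty V := ⟨W s⟩
  obtain ⟨m, hm⟩ := Nat.exists_eq_succ_of_ne_zero (Fintype.card_ne_zero (α := V))
  rw [hm] at hcard ⊢
  let g := S.orderEmbOfFin hcard
  have hgS (i : Fin (m + 1)) : s ≤ g i ∧ g i ≤ t ∧ first (W (g i)) = g i :=
    hS _ (S.orderEmbOfFin_mem hcard i)
  have hg0 : g 0 = s := by
    obtain ⟨j, hj⟩ : s ∈ Set.range g := by rwa [S.range_orderEmbOfFin hcard]
    exact le_antisymm (hj ▸ g.monotone (Fin.zero_le j)) (hgS 0).1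
  have hinj : Function.Injective (W ∘ g) := fun i j hij => g.injective <| by
    rw [← (hgS i).2.2, ← (hgS j).2.2]
    exact congrArg first hij
  have hbij : Function.Bijective (W ∘ g) :=
    (Fintype.bijective_iff_injective_and_card _).mpr ⟨hinj, by simp [hm]⟩
  refine ⟨Equiv.ofBijective _ hbij, ?_⟩
  have hshort := tourLength_comp_le_walkLen W g.monotone (hgS _).2.1 (by rw [hg0, hWt])
  rw [hg0] at hshort
  exact hshort

end shortcut

-- `u` is the vertex whose first visit after time `M` comes last, where every vertex has been
-- seen by time `M`; `s` is the last visit to `u` up to time `M`.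
lemma VisitsInfOften.exists_covering_return [Finite V] {W : ℕ → V} (hW : VisitsInfOften W) :
    ∃ s t, W t = W s ∧ (∀ k, s < k → k < t → W k ≠ W s) ∧
      ∀ v, ∃ k, s ≤ k ∧ k ≤ t ∧ W k = v := by
  classical
  have : Nonempty V := ⟨W 0⟩
  obtain ⟨M, hM⟩ := Finite.exists_le fun v => Nat.find (hW v 0)
  let next : V → ℕ := fun v => Nat.find (hW v (M + 1))
  obtain ⟨u, hu⟩ := Finite.exists_max next
  let s := Nat.findGreatest (W · = u) M
  have hWs : W s = u := Nat.findGreatest_spec (P := (W · = u)) (hM u) (Nat.find_spec (hW u 0)).2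
  refine ⟨s, next u, (Nat.find_spec (hW u (M + 1))).2.trans hWs.symm, fun k hsk hkt => ?_,
    fun v => ?_⟩
  · rw [hWs]
    by_cases hkM : k ≤ M
    · exact Nat.findGreatest_is_greatest hsk hkM
    · exact fun hk => Nat.find_min (hW u (M + 1)) hkt ⟨by omega, hk⟩
  · have hsM : s ≤ M := Nat.findGreatest_le M
    have hMv : M + 1 ≤ next v := (Nat.find_spec (hW v (M + 1))).1
    exact ⟨next v, by omega, hu v, (Nat.find_spec (hW v (M + 1))).2⟩

end

/-- The min-max weighted latency walk problem on metric graphs with all vertex weights 1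
is equivalent to the metric TSP: the optimal cost equals the minimum TSP tour length. -/
theorem unit_weight_min_max_latency_eq_metric_TSP {V : Type*} [MetricSpace V] [Fintype V]
    [Nonempty V] :
    OPT (fun a b => edist a b) (fun _ : V => (1 : ℝ≥0∞)) =
      ⨅ e : Fin (Fintype.card V) ≃ V,
        ∑ i : Fin (Fintype.card V), edist (e i) (e (finRotate _ i)) := by
  have : NeZero (Fintype.card V) := ⟨Fintype.card_ne_zero⟩
  refine le_antisymm (le_iInf fun e => ?_) (le_iInf₂ fun W hW => ?_)
  · calc OPT edist (fun _ => 1) ≤ walkCost edist (fun _ => 1) (cyclicWalk e) :=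
          iInf₂_le _ (visitsInfOften_cyclicWalk e e.surjective)
      _ ≤ tourLength edist e := by
          rw [walkCost_one]
          exact iSup_le (latency_cyclicWalk_le e edist)
  · obtain ⟨s, t, hWt, hgap, hcover⟩ := hW.exists_covering_return
    obtain ⟨e, he⟩ := exists_tour_le_walkLen W hWt hcover
    calc ⨅ e' : Fin (Fintype.card V) ≃ V, tourLength edist e' ≤ tourLength edist e := iInf_le _ e
      _ ≤ walkLen edist W s t := he
      _ ≤ latency edist W (W s) := walkLen_le_latency edist rfl hgap
      _ ≤ walkCost edist (fun _ => 1) W := by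
          rw [walkCost_one]
          exact le_iSup (latency edist W) (W s)
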